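/- arXiv:2207.02471 — 8 statements merged into one kernel-verified Lean document; each statement's English description precedes it below -/
import Mathlib

section
/- Let G be a group and D a finite central subgroup of G. Let {H_i | i ∈ ℕ} be a descending chain of subgroups of G. If there is n ∈ ℕ such that D·H_n = D·H_i for all i ≥ n, then there is m ∈ ℕ such that H_m = H_i for all i ≥ m. -/
/-! Once `D ⊔ H i` is constant, `H i` is pinned down by `D ⊓ H i` (Dedekind's modular law, valid
because `D` normalizes every `H i`). The intersections `D ⊓ H i` form a descending chain of
subgroups of the finite group `D`, so they stabilize too. -/

namespace Subgroup

variable {G : Type*} [Group G]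

theorem le_of_le_sup_of_inf_le {D K H : Subgroup G} (hD : D ≤ normalizer (K : Set G))
    (hKH : K ≤ H) (hsup : H ≤ D ⊔ K) (hinf : D ⊓ H ≤ K) : H ≤ K := by
  intro x hx
  have hxDK : x ∈ ((D ⊔ K : Subgroup G) : Set G) := hsup hx
  rw [coe_mul_of_left_le_normalizer_right D K hD] at hxDK
  obtain ⟨d, hd, k, hk, rfl⟩ := hxDK
  have hdH : d ∈ H := by simpa using mul_mem hx (inv_mem (hKH hk))
  exact mul_mem (hinf ⟨hd, hdH⟩) hk

theorem exists_inf_eq_of_antitone {D : Subgroup G} [Finite D] {H : ℕ → Subgroup G}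
    (hH : Antitone H) : ∃ k, ∀ i ≥ k, D ⊓ H k = D ⊓ H i := by
  obtain ⟨k, hk⟩ := WellFoundedLT.antitone_chain_condition
    (f := fun i => (H i).subgroupOf D) fun i j hij => subgroupOf_mono D (hH hij)
  refine ⟨k, fun i hi => ?_⟩
  simpa only [inf_comm D, subgroupOf_inj] using hk i hi

end Subgroup

theorem stmt_0 {G : Type*} [Group G] (D : Subgroup G) (hDc : D ≤ Subgroup.center G)
    (hDfin : Finite D) (H : ℕ → Subgroup G) (hdesc : ∀ i, H (i + 1) ≤ H i)
    (hn : ∃ n : ℕ, ∀ i ≥ n, D ⊔ H n = D ⊔ H i) :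
    ∃ m : ℕ, ∀ i ≥ m, H m = H i := by
  have hH : Antitone H := antitone_nat_of_succ_le hdesc
  obtain ⟨n, hn⟩ := hn
  obtain ⟨k, hk⟩ := Subgroup.exists_inf_eq_of_antitone (D := D) hH
  refine ⟨max n k, fun i hi => le_antisymm ?_ (hH hi)⟩
  have hsup : H (max n k) ≤ D ⊔ H i :=
    (hn (max n k) le_sup_left ▸ hn i (le_sup_left.trans hi)) ▸ le_sup_right
  have hinf : D ⊓ H (max n k) ≤ H i :=
    (hk (max n k) le_sup_right ▸ hk i (le_sup_right.trans hi)) ▸ inf_le_right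
  exact Subgroup.le_of_le_sup_of_inf_le (hDc.trans (Subgroup.center_le_normalizer _))
    (hH hi) hsup hinf
end

section
/- Let G be a group and D a finite central subgroup of G. Let {H_i | i ∈ ℕ} be a descending chain of subgroups of G with ⋂_{i∈ℕ} H_i = 1. Then ⋂_{i∈ℕ} D·H_i = D. -/
/-!
Since `D` is normal, an element `x` of every `D ⊔ H i` can be written `x = d i * h i` with
`d i ∈ D` and `h i ∈ H i`. As `D` is finite, one `d` occurs for infinitely many `i`, so `d⁻¹ * x`
lies in infinitely many `H i`, hence in all of them because the chain descends, hence `x = d`.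
-/

open Filter

namespace Subgroup

variable {G : Type*} [Group G]

theorem normal_of_le_center {D : Subgroup G} (hD : D ≤ center G) : D.Normal :=
  ⟨fun n hn g => by rwa [mem_center_iff.mp (hD hn) g, mul_inv_cancel_right]⟩

theorem exists_inv_mul_mem_of_mem_normal_sup {D K : Subgroup G} [D.Normal] {x : G}
    (hx : x ∈ D ⊔ K) : ∃ d ∈ D, d⁻¹ * x ∈ K := by
  obtain ⟨d, hd, k, hk, rfl⟩ := mem_sup_of_normal_left.mp hx
  exact ⟨d, hd, by rwa [inv_mul_cancel_left]⟩

theorem mem_iInf_of_antitone_of_frequently_mem {H : ℕ → Subgroup G} (hH : Antitone H) {x : G}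
    (hx : ∃ᶠ i in atTop, x ∈ H i) : x ∈ ⨅ i, H i := by
  refine mem_iInf.mpr fun i => ?_
  obtain ⟨j, hij, hxj⟩ := frequently_atTop.mp hx i
  exact hH hij hxj

theorem iInf_normal_sup_eq_of_antitone {D : Subgroup G} [D.Normal] [Finite D]
    {H : ℕ → Subgroup G} (hH : Antitone H) (hbot : ⨅ i, H i = ⊥) :
    ⨅ i, D ⊔ H i = D := by
  refine le_antisymm (fun x hx => ?_) (le_iInf fun _ => le_sup_left)
  have hdecomp : ∀ i, ∃ d : D, (d : G)⁻¹ * x ∈ H i := fun i => by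
    obtain ⟨d, hd, hdx⟩ := exists_inv_mul_mem_of_mem_normal_sup (mem_iInf.mp hx i)
    exact ⟨⟨d, hd⟩, hdx⟩
  obtain ⟨d, hd⟩ : ∃ d : D, ∃ᶠ i in atTop, (d : G)⁻¹ * x ∈ H i :=
    frequently_exists.mp (Eventually.frequently (Eventually.of_forall hdecomp))
  have hdx := mem_iInf_of_antitone_of_frequently_mem hH hd
  rw [hbot, mem_bot, inv_mul_eq_one] at hdx
  exact hdx ▸ d.2

end Subgroup

theorem stmt_1 {G : Type*} [Group G] (D : Subgroup G) (hDc : D ≤ Subgroup.center G)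
    (hDfin : Finite D) (H : ℕ → Subgroup G) (hdesc : ∀ i, H (i + 1) ≤ H i)
    (hint : (⨅ i : ℕ, H i) = ⊥) :
    (⨅ i : ℕ, D ⊔ H i) = D := by
  have := Subgroup.normal_of_le_center hDc
  exact Subgroup.iInf_normal_sup_eq_of_antitone (antitone_nat_of_succ_le hdesc) hint
end

section
/- Let G be a group of finite rank which has a finite normal subgroup D such that G/D is torsion-free abelian. Then G has a characteristic central torsion-free subgroup A of finite index. -/
/-- A monoid is torsion-free if no nontrivial element has finite order
(the definition `Monoid.IsTorsionFree` of the older Mathlib, since removed). -/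
def Monoid.IsTorsionFree (G : Type*) [Monoid G] : Prop :=
  ∀ g : G, g ≠ 1 → ¬IsOfFinOrder g

open Subgroup

private lemma pow_mod_eq' {Q : Type*} [Group Q] {E : ℕ} {q : Q} (hq : q ^ E = 1) (a : ℕ) :
    q ^ (a % E) = q ^ a := by
  conv_rhs => rw [← Nat.div_add_mod a E]
  rw [pow_add, pow_mul, hq, one_pow, one_mul]

private lemma closure_subset_finset' {Q : Type*} [CommGroup Q] {E : ℕ} (hE : 0 < E)
    (hexp : ∀ q : Q, q ^ E = 1) (S : Finset Q) :
    ∃ F : Finset Q, F.card ≤ E ^ S.card ∧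
      ((Subgroup.closure (S : Set Q) : Subgroup Q) : Set Q) ⊆ ↑F := by
  classical
  set f : (↥S → Fin E) → Q := fun v => ∏ i : ↥S, (i : Q) ^ ((v i : ℕ)) with hf
  refine ⟨Finset.image f Finset.univ, ?_, ?_⟩
  · calc (Finset.image f Finset.univ).card ≤ Finset.univ.card := Finset.card_image_le
      _ = Fintype.card (↥S → Fin E) := Finset.card_univ
      _ = (Fintype.card (Fin E)) ^ (Fintype.card ↥S) := Fintype.card_fun
      _ = E ^ S.card := by rw [Fintype.card_fin, Fintype.card_coe]
  · intro x hx
    simp only [SetLike.mem_coe] at hx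
    induction hx using Subgroup.closure_induction with
    | mem x hxS =>
        refine Finset.mem_coe.mpr (Finset.mem_image.mpr
          ⟨fun i => if i = ⟨x, hxS⟩ then ⟨1 % E, Nat.mod_lt 1 hE⟩ else ⟨0, hE⟩,
            Finset.mem_univ _, ?_⟩)
        show (∏ i : ↥S, (i : Q) ^
          (((if i = (⟨x, hxS⟩ : ↥S) then (⟨1 % E, Nat.mod_lt 1 hE⟩ : Fin E)
              else ⟨0, hE⟩) : Fin E) : ℕ)) = x
        rw [Finset.prod_eq_single_of_mem (⟨x, hxS⟩ : ↥S) (Finset.mem_univ _)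
          (fun b _ hb => by simp [hb])]
        simp only [if_pos rfl]
        exact (pow_mod_eq' (hexp x) 1).trans (pow_one x)
    | one =>
        refine Finset.mem_coe.mpr (Finset.mem_image.mpr ⟨fun _ => ⟨0, hE⟩, Finset.mem_univ _, ?_⟩)
        simp [hf]
    | mul x y hx hy ihx ihy =>
        obtain ⟨v, -, hv⟩ := Finset.mem_image.mp (Finset.mem_coe.mp ihx)
        obtain ⟨w, -, hw⟩ := Finset.mem_image.mp (Finset.mem_coe.mp ihy)
        refine Finset.mem_coe.mpr (Finset.mem_image.mpr
          ⟨fun i => ⟨((v i : ℕ) + (w i : ℕ)) % E, Nat.mod_lt _ hE⟩, Finset.mem_univ _, ?_⟩)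
        show (∏ i : ↥S, (i : Q) ^ ((((fun i => (⟨((v i : ℕ) + (w i : ℕ)) % E,
            Nat.mod_lt _ hE⟩ : Fin E)) i) : Fin E) : ℕ)) = x * y
        calc (∏ i : ↥S, (i : Q) ^ (((v i : ℕ) + (w i : ℕ)) % E))
            = ∏ i : ↥S, ((i : Q) ^ (v i : ℕ) * (i : Q) ^ (w i : ℕ)) := by
              refine Finset.prod_congr rfl fun i _ => ?_
              rw [pow_mod_eq' (hexp _), pow_add]
          _ = (∏ i : ↥S, (i : Q) ^ (v i : ℕ)) * ∏ i : ↥S, (i : Q) ^ (w i : ℕ) :=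
              Finset.prod_mul_distrib
          _ = x * y := by rw [← hv, ← hw]
    | inv x hx ihx =>
        obtain ⟨v, -, hv⟩ := Finset.mem_image.mp (Finset.mem_coe.mp ihx)
        refine Finset.mem_coe.mpr (Finset.mem_image.mpr
          ⟨fun i => ⟨(E - (v i : ℕ)) % E, Nat.mod_lt _ hE⟩, Finset.mem_univ _, ?_⟩)
        show (∏ i : ↥S, (i : Q) ^ ((((fun i => (⟨(E - (v i : ℕ)) % E,
            Nat.mod_lt _ hE⟩ : Fin E)) i) : Fin E) : ℕ)) = x⁻¹
        calc (∏ i : ↥S, (i : Q) ^ ((E - (v i : ℕ)) % E))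
            = ∏ i : ↥S, ((i : Q) ^ (v i : ℕ))⁻¹ := by
              refine Finset.prod_congr rfl fun i _ => ?_
              rw [pow_mod_eq' (hexp _)]
              refine eq_inv_of_mul_eq_one_left ?_
              rw [← pow_add, Nat.sub_add_cancel (le_of_lt (v i).2), hexp]
          _ = (∏ i : ↥S, (i : Q) ^ (v i : ℕ))⁻¹ := Finset.prod_inv_distrib _
          _ = x⁻¹ := by rw [← hv]

private lemma finite_of_bounded_rank' {Q : Type*} [CommGroup Q] {E r : ℕ} (hE : 0 < E)
    (hexp : ∀ q : Q, q ^ E = 1)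
    (hrk : ∀ t : Finset Q, ∃ S : Finset Q, S.card ≤ r ∧
      (↑t : Set Q) ⊆ ((Subgroup.closure (↑S : Set Q) : Subgroup Q) : Set Q)) :
    Finite Q := by
  by_contra hinf
  rw [not_finite_iff_infinite] at hinf
  obtain ⟨t, ht⟩ := Infinite.exists_subset_card_eq Q (E ^ r + 1)
  obtain ⟨S, hScard, hsub⟩ := hrk t
  obtain ⟨F, hFcard, hclos⟩ := closure_subset_finset' hE hexp S
  have htF : t ⊆ F := fun x hx => Finset.mem_coe.mp (hclos (hsub (Finset.mem_coe.mpr hx)))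
  have h1 := Finset.card_le_card htF
  have h2 : E ^ S.card ≤ E ^ r := Nat.pow_le_pow_right hE hScard
  omega

theorem stmt_4 {G : Type*} [Group G]
    (hrank : ∃ r : ℕ, ∀ H : Subgroup G, H.FG →
      ∃ S : Finset G, S.card ≤ r ∧ Subgroup.closure (S : Set G) = H)
    (D : Subgroup G) [D.Normal] (hDfin : Finite D)
    (habel : ∀ x y : G ⧸ D, x * y = y * x)
    (htf : Monoid.IsTorsionFree (G ⧸ D)) :
    ∃ A : Subgroup G, A.Characteristic ∧ A ≤ Subgroup.center G ∧
      Monoid.IsTorsionFree A ∧ A.FiniteIndex := by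
  obtain ⟨r, hrank⟩ := hrank
  set n := Nat.card ↥D with hn
  have hn0 : 0 < n := Nat.card_pos
  -- commutators lie in D
  have hDcomm : ∀ x y : G, (x * y)⁻¹ * (y * x) ∈ D := by
    intro x y
    have h := habel ((x : G ⧸ D)) ((y : G ⧸ D))
    rw [← QuotientGroup.mk_mul, ← QuotientGroup.mk_mul] at h
    exact QuotientGroup.eq.mp h
  -- torsion elements lie in D
  have htors : ∀ x : G, IsOfFinOrder x → x ∈ D := by
    intro x hx
    have h1 : ((x : G ⧸ D)) = 1 := by
      by_contra h
      exact htf _ h ((QuotientGroup.mk' D).isOfFinOrder hx)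
    rwa [QuotientGroup.eq_one_iff] at h1
  -- n-th powers kill D
  have hDpow : ∀ x ∈ D, x ^ n = 1 := by
    intro x hx
    have h := pow_card_eq_one' (G := ↥D) (x := ⟨x, hx⟩)
    have h2 : ((⟨x, hx⟩ : ↥D) : G) ^ n = ((1 : ↥D) : G) := by
      rw [← SubgroupClass.coe_pow, h]
    simpa using h2
  set C := Subgroup.centralizer (D : Set G) with hC
  -- key : n-th powers of the centralizer are central
  have hCpow : ∀ x ∈ C, x ^ n ∈ Subgroup.center G := by
    intro x hx
    rw [Subgroup.mem_center_iff]
    intro g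
    have hc : x⁻¹ * (g⁻¹ * x * g) ∈ D := by
      have := hDcomm g x
      have he : (g * x)⁻¹ * (x * g) = x⁻¹ * (g⁻¹ * x * g) := by group
      rwa [he] at this
    set c := x⁻¹ * (g⁻¹ * x * g) with hcdef
    have hcommc : c * x = x * c := (Subgroup.mem_centralizer_iff.mp hx) c hc
    have hconj : g⁻¹ * x * g = x * c := by rw [hcdef]; group
    have hconjn : g⁻¹ * x ^ n * g = (x * c) ^ n := by
      rw [← hconj]
      calc g⁻¹ * x ^ n * g = g⁻¹ * x ^ n * g⁻¹⁻¹ := by rw [inv_inv]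
        _ = (g⁻¹ * x * g⁻¹⁻¹) ^ n := conj_pow.symm
        _ = (g⁻¹ * x * g) ^ n := by rw [inv_inv]
    have hmp : (x * c) ^ n = x ^ n * c ^ n := (Commute.mul_pow hcommc.symm n)
    rw [hmp, hDpow c hc, mul_one] at hconjn
    conv_lhs => rw [← hconjn]
    group
  -- powers landing in the centralizer
  haveI hMA : Finite (MulAut ↥D) :=
    Finite.of_injective (fun e => (e : ↥D → ↥D)) DFunLike.coe_injective
  set m := Nat.card (MulAut ↥D) with hm
  have hm0 : 0 < m := Nat.card_pos
  have hmC : ∀ g : G, g ^ m ∈ C := by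
    intro g
    have h1 : (MulAut.conjNormal (g ^ m) : MulAut ↥D) = 1 := by
      rw [map_pow, pow_card_eq_one']
    rw [hC, Subgroup.mem_centralizer_iff]
    intro d hd
    have h2 : ((MulAut.conjNormal (g ^ m) ⟨d, hd⟩ : ↥D) : G) = ((⟨d, hd⟩ : ↥D) : G) := by
      rw [h1]; rfl
    rw [MulAut.conjNormal_apply] at h2
    calc d * g ^ m = (g ^ m * d * (g ^ m)⁻¹) * g ^ m := by rw [h2]
      _ = g ^ m * d := by group
  -- the subgroup A of n-th powers of central elements
  set A : Subgroup G :=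
    { carrier := {a | ∃ z ∈ Subgroup.center G, z ^ n = a}
      one_mem' := ⟨1, one_mem _, one_pow n⟩
      mul_mem' := by
        rintro a b ⟨z, hz, rfl⟩ ⟨w, hw, rfl⟩
        exact ⟨z * w, mul_mem hz hw,
          (Commute.mul_pow ((Subgroup.mem_center_iff.mp hz w).symm) n)⟩
      inv_mem' := by
        rintro a ⟨z, hz, rfl⟩
        exact ⟨z⁻¹, inv_mem hz, by rw [inv_pow]⟩ } with hA
  have hAmem : ∀ a : G, a ∈ A ↔ ∃ z ∈ Subgroup.center G, z ^ n = a := fun a => Iff.rfl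
  have hA_center : A ≤ Subgroup.center G := by
    rintro a ⟨z, hz, rfl⟩
    exact pow_mem hz n
  -- characteristic
  have hcentmap : ∀ (φ : G ≃* G) (z : G), z ∈ Subgroup.center G → φ z ∈ Subgroup.center G := by
    intro φ z hz
    rw [Subgroup.mem_center_iff] at hz ⊢
    intro g
    calc g * φ z = φ (φ.symm g) * φ z := by rw [φ.apply_symm_apply]
      _ = φ (φ.symm g * z) := by rw [map_mul]
      _ = φ (z * φ.symm g) := by rw [← hz (φ.symm g)]
      _ = φ z * g := by rw [map_mul, φ.apply_symm_apply]
  have hchar : A.Characteristic := by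
    rw [Subgroup.characteristic_iff_comap_eq]
    intro φ
    ext a
    rw [Subgroup.mem_comap]
    simp only [MulEquiv.coe_toMonoidHom]
    constructor
    · rintro ⟨z, hz, hzn⟩
      refine ⟨φ.symm z, hcentmap φ.symm z hz, ?_⟩
      have := congrArg φ.symm hzn
      rwa [map_pow, φ.symm_apply_apply] at this
    · rintro ⟨z, hz, rfl⟩
      exact ⟨φ z, hcentmap φ z hz, by rw [← map_pow]⟩
  -- torsion-free
  have htfA : Monoid.IsTorsionFree ↥A := by
    intro a ha hfin
    obtain ⟨z, hz, hzn⟩ := a.2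
    have hfin' : IsOfFinOrder (a : G) := A.subtype.isOfFinOrder hfin
    rw [← hzn] at hfin'
    have hzfin : IsOfFinOrder z := hfin'.of_pow hn0.ne'
    have hzD : z ∈ D := htors z hzfin
    have : (a : G) = 1 := by rw [← hzn, hDpow z hzD]
    exact ha (Subtype.ext this)
  -- finite index
  have hpowA : ∀ g : G, g ^ (m * n * n) ∈ A := by
    intro g
    refine ⟨(g ^ m) ^ n, hCpow _ (hmC g), ?_⟩
    rw [← pow_mul, ← pow_mul, mul_assoc]
  haveI hAnormal : A.Normal := by
    constructor
    intro a ha g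
    have : g * a = a * g := Subgroup.mem_center_iff.mp (hA_center ha) g
    have h2 : g * a * g⁻¹ = a := by rw [this]; group
    rwa [h2]
  set J := A ⊔ D with hJ
  letI commQ : CommGroup (G ⧸ J) :=
    { (inferInstance : Group (G ⧸ J)) with
      mul_comm := by
        intro a b
        induction a using QuotientGroup.induction_on with | H x =>
        induction b using QuotientGroup.induction_on with | H y =>
        rw [← QuotientGroup.mk_mul, ← QuotientGroup.mk_mul]
        exact QuotientGroup.eq.mpr (Subgroup.mem_sup_right (hDcomm x y)) }
  have hexpQ : ∀ q : G ⧸ J, q ^ (m * n * n) = 1 := by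
    intro q
    induction q using QuotientGroup.induction_on with | H g =>
    rw [← QuotientGroup.mk_pow, QuotientGroup.eq_one_iff]
    exact Subgroup.mem_sup_left (hpowA g)
  have hrkQ : ∀ t : Finset (G ⧸ J), ∃ S : Finset (G ⧸ J), S.card ≤ r ∧
      (↑t : Set (G ⧸ J)) ⊆ ((Subgroup.closure (↑S : Set (G ⧸ J)) : Subgroup (G ⧸ J)) : Set (G ⧸ J)) := by
    intro t
    classical
    choose lift hlift using QuotientGroup.mk'_surjective J
    set t' : Finset G := t.image lift with ht'
    obtain ⟨S₀, hS₀card, hS₀⟩ := hrank (Subgroup.closure (↑t' : Set G)) ⟨t', rfl⟩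
    refine ⟨S₀.image (QuotientGroup.mk' J), le_trans Finset.card_image_le hS₀card, ?_⟩
    intro q hq
    have hq' : lift q ∈ Subgroup.closure (↑S₀ : Set G) := by
      rw [hS₀]
      exact Subgroup.subset_closure (Finset.mem_coe.mpr (Finset.mem_image_of_mem lift hq))
    have h2 : QuotientGroup.mk' J (lift q) ∈
        Subgroup.closure ((QuotientGroup.mk' J) '' (↑S₀ : Set G)) := by
      rw [← MonoidHom.map_closure]
      exact ⟨_, hq', rfl⟩
    rw [hlift q] at h2
    rwa [Finset.coe_image]
  haveI hQfin : Finite (G ⧸ J) :=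
    finite_of_bounded_rank' (by positivity) hexpQ hrkQ
  have hJx : J.index ≠ 0 := Subgroup.index_ne_zero_of_finite
  have hAJ : A ≤ J := le_sup_left
  have hrel : A.relIndex J ≠ 0 := by
    rw [hJ, sup_comm, Subgroup.relIndex_sup_right]
    haveI : Finite (↥D ⧸ A.subgroupOf D) := Quotient.finite _
    exact Subgroup.index_ne_zero_of_finite
  refine ⟨A, hchar, hA_center, htfA, ⟨?_⟩⟩
  rw [← Subgroup.relIndex_mul_index hAJ]
  exact Nat.mul_ne_zero hrel hJx
end

section
/- Let G be a group with finite derived subgroup G', let C = C_G(G') be the centralizer of G' in G, and let m = |D| where D is a finite normal subgroup of G containing G'. Then the subgroup B generated by the m-th powers of elements of C is central in G. -/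
open scoped commutatorElement

theorem stmt_5 {G : Type*} [Group G] (hG' : Finite (commutator G))
    (D : Subgroup G) [D.Normal] (hDfin : Finite D) (hG'D : commutator G ≤ D) :
    Subgroup.closure {x : G | ∃ c ∈ Subgroup.centralizer (commutator G : Set G),
        x = c ^ (Nat.card D)} ≤ Subgroup.center G := by
  rw [Subgroup.closure_le]
  rintro x ⟨c, hc, rfl⟩
  rw [SetLike.mem_coe, Subgroup.mem_center_iff]
  intro g
  have hcomm : ∀ y ∈ commutator G, Commute c y := by
    intro y hy
    exact (Subgroup.mem_centralizer_iff.mp hc y hy).symm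
  have hmem : ∀ n : ℕ, ⁅c ^ n, g⁆ ∈ commutator G := by
    intro n
    exact Subgroup.commutator_mem_commutator (Subgroup.mem_top _) (Subgroup.mem_top _)
  have key : ∀ n : ℕ, ⁅c ^ n, g⁆ = ⁅c, g⁆ ^ n := by
    intro n
    induction n with
    | zero => simp [commutatorElement_def]
    | succ n ih =>
      have h1 : ⁅c ^ (n + 1), g⁆ = c * ⁅c ^ n, g⁆ * c⁻¹ * ⁅c, g⁆ := by
        rw [pow_succ']
        simp only [commutatorElement_def]
        group
      have h2 : c * ⁅c ^ n, g⁆ * c⁻¹ = ⁅c ^ n, g⁆ := by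
        have := hcomm _ (hmem n)
        rw [this.eq]
        group
      rw [h1, h2, ih, pow_succ]
  have hD : ⁅c, g⁆ ∈ D := hG'D (Subgroup.commutator_mem_commutator (Subgroup.mem_top _) (Subgroup.mem_top _))
  have hpow : ⁅c, g⁆ ^ (Nat.card D) = 1 := by
    have h1 : (⟨⁅c, g⁆, hD⟩ : D) ^ (Nat.card D) = 1 := pow_card_eq_one'
    have h2 := congrArg (fun y : D => (y : G)) h1
    simp only [SubmonoidClass.coe_pow, OneMemClass.coe_one] at h2
    exact h2
  have : ⁅c ^ (Nat.card D), g⁆ = 1 := by rw [key, hpow]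
  have := commutatorElement_eq_one_iff_commute.mp this
  exact this.symm.eq
end

section
/- Let A be a finitely generated abelian group, k a field, B a subgroup of finite index in A, and I an ideal of kA. A prime P minimal over I in kA satisfies: P ∩ kB is NOT minimal over I ∩ kB in kB if and only if there exists a prime S minimal over I in kA with S ∩ kB strictly contained in P ∩ kB. -/
open MonoidAlgebra Polynomial

lemma aux_integral {k : Type*} [Field k] {A : Type*} [CommGroup A]
    (B : Subgroup A) [B.FiniteIndex] :
    letI := (MonoidAlgebra.mapDomainRingHom k B.subtype).toAlgebra
    Algebra.IsIntegral (MonoidAlgebra k B) (MonoidAlgebra k A) := by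
  letI := (MonoidAlgebra.mapDomainRingHom k B.subtype).toAlgebra
  set f := MonoidAlgebra.mapDomainRingHom k B.subtype with hf
  have hfs : ∀ (b : B) (c : k), f (single b c) = single (b : A) c := by
    intro b c
    simp [hf, MonoidAlgebra.mapDomainRingHom, Finsupp.mapDomain_single]
  have hone : ∀ a : A, IsIntegral (MonoidAlgebra k B) (single a (1 : k)) := by
    intro a
    have hn : B.index ≠ 0 := Subgroup.FiniteIndex.index_ne_zero
    refine ⟨X ^ B.index - C ((single (⟨a ^ B.index, B.pow_index_mem a⟩ : B) (1 : k)) : MonoidAlgebra k B),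
      Polynomial.monic_X_pow_sub_C _ hn, ?_⟩
    have : (single a (1 : k) : MonoidAlgebra k A) ^ B.index = single (a ^ B.index) 1 := by
      rw [MonoidAlgebra.single_pow, one_pow]
    have halg : algebraMap (MonoidAlgebra k B) (MonoidAlgebra k A) = f := rfl
    simp [eval₂_sub, this, halg, hfs]
  refine ⟨fun x => ?_⟩
  show x ∈ integralClosure (MonoidAlgebra k B) (MonoidAlgebra k A)
  induction x using MonoidAlgebra.induction with
  | zero => exact zero_mem _
  | single_add a c g _ _ ih =>
    refine add_mem ?_ ih
    have : (single a c : MonoidAlgebra k A) = single 1 c * single a 1 := by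
      rw [MonoidAlgebra.single_mul_single, one_mul, mul_one]
    rw [this]
    refine mul_mem ?_ (hone a)
    have : (single (1 : A) c : MonoidAlgebra k A) = algebraMap (MonoidAlgebra k B) _ (single 1 c) := by
      show _ = f _
      rw [hfs]; rfl
    rw [this]
    exact (integralClosure _ _).algebraMap_mem _

theorem stmt_8 {k : Type*} [Field k] {A : Type*} [CommGroup A] [Group.FG A]
    (B : Subgroup A) [B.FiniteIndex]
    (I : Ideal (MonoidAlgebra k A))
    (P : Ideal (MonoidAlgebra k A)) (hP : P ∈ I.minimalPrimes) :
    P.comap (MonoidAlgebra.mapDomainRingHom k B.subtype) ∉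
        (I.comap (MonoidAlgebra.mapDomainRingHom k B.subtype)).minimalPrimes ↔
      ∃ S ∈ I.minimalPrimes,
        S.comap (MonoidAlgebra.mapDomainRingHom k B.subtype) <
          P.comap (MonoidAlgebra.mapDomainRingHom k B.subtype) := by
  letI := (MonoidAlgebra.mapDomainRingHom k B.subtype).toAlgebra
  have hint := aux_integral (k := k) B
  set f := MonoidAlgebra.mapDomainRingHom k B.subtype with hf
  have halg : algebraMap (MonoidAlgebra k B) (MonoidAlgebra k A) = f := rfl
  have hPp : P.IsPrime := hP.1.1
  have hQp : (P.comap f).IsPrime := hPp.comap f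
  have hIQ : I.comap f ≤ P.comap f := Ideal.comap_mono hP.1.2
  constructor
  · intro hnot
    obtain ⟨Q', hQ'min, hQ'le⟩ := Ideal.exists_minimalPrimes_le (I := I.comap f) hIQ
    have hlt : Q' < P.comap f := lt_of_le_of_ne hQ'le (fun h => hnot (h ▸ hQ'min))
    haveI : Q'.IsPrime := hQ'min.1.1
    obtain ⟨T, hTI, hTp, hTc⟩ :=
      Ideal.exists_ideal_over_prime_of_isIntegral (S := MonoidAlgebra k A) Q' I
        (by rw [halg]; exact hQ'min.1.2)
    haveI := hTp
    obtain ⟨S, hSmin, hSle⟩ := Ideal.exists_minimalPrimes_le (I := I) hTI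
    refine ⟨S, hSmin, lt_of_le_of_lt ?_ hlt⟩
    calc S.comap f ≤ T.comap f := Ideal.comap_mono hSle
      _ = Q' := by rw [← halg, hTc]
  · rintro ⟨S, hSmin, hSlt⟩ hmin
    have : P.comap f ≤ S.comap f :=
      hmin.2 ⟨hSmin.1.1.comap f, Ideal.comap_mono hSmin.1.2⟩ hSlt.le
    exact absurd this (not_le_of_gt hSlt)
end

section
/- Let A be a finitely generated abelian group, k a field, B a finite-index subgroup of A, and I, J ideals of kA. If the set of minimal primes over I equals the set of minimal primes over J in kA, then the set of minimal primes over I ∩ kB equals the set of minimal primes over J ∩ kB in kB. -/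
namespace Ideal

variable {R S : Type*} [CommSemiring R] [CommSemiring S]

theorem minimalPrimes_eq_iff_radical_eq {I J : Ideal R} :
    I.minimalPrimes = J.minimalPrimes ↔ I.radical = J.radical := by
  refine ⟨fun h ↦ ?_, fun h ↦ ?_⟩
  · rw [← sInf_minimalPrimes, ← sInf_minimalPrimes, h]
  · rw [← radical_minimalPrimes, h, radical_minimalPrimes]

theorem minimalPrimes_comap_eq_of_minimalPrimes_eq (f : R →+* S) {I J : Ideal S}
    (h : I.minimalPrimes = J.minimalPrimes) :
    (I.comap f).minimalPrimes = (J.comap f).minimalPrimes := by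
  rw [minimalPrimes_eq_iff_radical_eq, ← comap_radical, ← comap_radical,
    minimalPrimes_eq_iff_radical_eq.mp h]

end Ideal

theorem stmt_9_general {k : Type*} [Field k] {A : Type*} [CommGroup A]
    (B : Subgroup A)
    (I J : Ideal (MonoidAlgebra k A))
    (h : I.minimalPrimes = J.minimalPrimes) :
    (I.comap (MonoidAlgebra.mapDomainRingHom k B.subtype)).minimalPrimes =
      (J.comap (MonoidAlgebra.mapDomainRingHom k B.subtype)).minimalPrimes :=
  Ideal.minimalPrimes_comap_eq_of_minimalPrimes_eq _ h

theorem stmt_9 {k : Type*} [Field k] {A : Type*} [CommGroup A] [Group.FG A]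
    (B : Subgroup A) [B.FiniteIndex]
    (I J : Ideal (MonoidAlgebra k A))
    (h : I.minimalPrimes = J.minimalPrimes) :
    (I.comap (MonoidAlgebra.mapDomainRingHom k B.subtype)).minimalPrimes =
      (J.comap (MonoidAlgebra.mapDomainRingHom k B.subtype)).minimalPrimes :=
  stmt_9_general B I J h
end

section
/- Let G be a finitely generated torsion-free abelian group (free abelian of finite rank), let k be a field, and let P be a nonzero prime ideal of kG. Then for any subgroup B of finite index in G, P ∩ kB ≠ 0. -/
theorem stmt_17 {k : Type*} [Field k] {G : Type*} [CommGroup G] [Group.FG G]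
    (htf : ∀ g : G, g ≠ 1 → ¬IsOfFinOrder g)
    (P : Ideal (MonoidAlgebra k G)) (hP : P.IsPrime) (hP0 : P ≠ ⊥)
    (B : Subgroup G) [B.FiniteIndex] :
    P.comap (MonoidAlgebra.mapDomainRingHom k B.subtype) ≠ ⊥ := by
  classical
  -- `G` has unique products, so `MonoidAlgebra k G` is a domain.
  haveI htf' : IsAddTorsionFree (Additive G) :=
    isAddTorsionFree_iff_not_isOfFinAddOrder.mpr fun g hg hfin =>
    htf g.toMul hg (isOfFinAddOrder_ofMul_iff.mp hfin)
  haveI : NoZeroSMulDivisors ℤ (Additive G) := inferInstance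
  haveI : Module.Finite ℤ (Additive G) := Module.Finite.iff_addGroup_fg.mpr inferInstance
  haveI : Module.Free ℤ (Additive G) := Module.free_of_finite_type_torsion_free'
  let b := Module.Free.chooseBasis ℤ (Additive G)
  haveI : UniqueSums (Module.Free.ChooseBasisIndex ℤ (Additive G) →₀ ℤ) :=
    UniqueSums.of_injective_addHom (Finsupp.coeFnAddHom).toAddHom
      DFunLike.coe_injective inferInstance
  haveI : UniqueSums (Additive G) :=
    UniqueSums.of_injective_addHom (b.repr : Additive G ≃ₗ[ℤ] _).toLinearMap.toAddMonoidHom.toAddHom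
      b.repr.injective inferInstance
  haveI : UniqueProds G :=
    UniqueProds.of_injective_mulHom
      (⟨fun g => Multiplicative.ofAdd (Additive.ofMul g), fun _ _ => rfl⟩ :
        G →ₙ* Multiplicative (Additive G))
      (fun _ _ h => h) inferInstance
  haveI : IsDomain (MonoidAlgebra k G) := NoZeroDivisors.to_isDomain _
  -- Set up the algebra structure
  set f := MonoidAlgebra.mapDomainRingHom k B.subtype with hf
  letI : Algebra (MonoidAlgebra k B) (MonoidAlgebra k G) := f.toAlgebra
  have halg : algebraMap (MonoidAlgebra k B) (MonoidAlgebra k G) = f :=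
    RingHom.algebraMap_toAlgebra f
  -- every element of `MonoidAlgebra k G` is integral over `MonoidAlgebra k B`
  have hsingle : ∀ (g : G) (c : k),
      IsIntegral (MonoidAlgebra k B) (MonoidAlgebra.single g c) := by
    intro g c
    have hn : g ^ B.index ∈ B := Subgroup.pow_index_mem B g
    have h1 : IsIntegral (MonoidAlgebra k B) (MonoidAlgebra.single g (1 : k)) := by
      refine ⟨Polynomial.X ^ B.index -
        Polynomial.C (MonoidAlgebra.single (⟨g ^ B.index, hn⟩ : B) (1 : k)), ?_, ?_⟩
      · exact Polynomial.monic_X_pow_sub_C _ Subgroup.FiniteIndex.index_ne_zero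
      · simp only [Polynomial.eval₂_sub, Polynomial.eval₂_pow, Polynomial.eval₂_X,
          Polynomial.eval₂_C, halg, hf, MonoidAlgebra.mapDomainRingHom_apply,
          Finsupp.mapDomain_single, MonoidAlgebra.single_pow, one_pow, sub_eq_zero,
          AddMonoidHom.toFun_eq_coe, Finsupp.mapDomain.addMonoidHom_apply, Subgroup.coe_subtype,
          MonoidAlgebra.mapDomain_single]
    have h2 : MonoidAlgebra.single g c =
        algebraMap (MonoidAlgebra k B) (MonoidAlgebra k G)
          (MonoidAlgebra.single (1 : B) c) * MonoidAlgebra.single g (1 : k) := by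
      rw [halg, hf]
      simp [MonoidAlgebra.mapDomainRingHom_apply, Finsupp.mapDomain_single,
        MonoidAlgebra.single_mul_single]
    rw [h2]
    exact (isIntegral_algebraMap).mul h1
  have hint : ∀ x : MonoidAlgebra k G, IsIntegral (MonoidAlgebra k B) x := by
    intro x
    have : x ∈ integralClosure (MonoidAlgebra k B) (MonoidAlgebra k G) := by
      exact MonoidAlgebra.induction_linear x (zero_mem _) (fun _ _ => add_mem) hsingle
    exact this
  obtain ⟨x, hxP, hx0⟩ := Submodule.exists_mem_ne_zero_of_ne_bot hP0
  rw [← halg]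
  exact Ideal.comap_ne_bot_of_integral_mem hx0 hxP (hint x)
end

section
/- Let G be a group, H a subgroup of finite index, K a normal subgroup of G contained in H, R a ring, and d an element of an RG-module with dRG = dRH ⊗_{RH} RG. If I is a G-invariant ideal of RK, then (dRG)/(dRG)I decomposes as a direct sum ⊕_{t∈T} ((dRH)/(dRH)I)t over a right transversal T of H in G. -/
/-- The `R`-linear action of a group element `g` on a module over the group ring. -/
noncomputable def gsmul (R : Type*) [CommRing R] {G : Type*} [Group G]
    (M : Type*) [AddCommGroup M] [Module R M] [Module (MonoidAlgebra R G) M]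
    [IsScalarTower R (MonoidAlgebra R G) M] (g : G) : M →ₗ[R] M where
  toFun m := MonoidAlgebra.of R G g • m
  map_add' x y := smul_add _ x y
  map_smul' c x := by
    simp only [RingHom.id_apply]
    rw [← algebraMap_smul (MonoidAlgebra R G) c x, ← mul_smul,
      ← Algebra.commutes c (MonoidAlgebra.of R G g), mul_smul, algebraMap_smul]

section Aux

variable {R : Type*} [CommRing R] {G : Type*} [Group G]
    (M : Type*) [AddCommGroup M] [Module R M] [Module (MonoidAlgebra R G) M]
    [IsScalarTower R (MonoidAlgebra R G) M]

/-- `R`-linear map given by the action of a fixed element of the monoid algebra. -/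
noncomputable def asmul (a : MonoidAlgebra R G) : M →ₗ[R] M where
  toFun m := a • m
  map_add' x y := smul_add _ x y
  map_smul' c x := by
    simp only [RingHom.id_apply]
    rw [← algebraMap_smul (MonoidAlgebra R G) c x, ← mul_smul,
      ← Algebra.commutes c a, mul_smul, algebraMap_smul]

@[simp] lemma asmul_apply (a : MonoidAlgebra R G) (m : M) : asmul M a m = a • m := rfl

lemma gsmul_eq_asmul (g : G) : gsmul R M g = asmul M (MonoidAlgebra.of R G g) := rfl

variable (K : Subgroup G) [K.Normal]

lemma emb_apply {H : Type*} [Group H]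
    (f : G →* H) (x : MonoidAlgebra R G) :
    MonoidAlgebra.mapDomainRingHom R f x = MonoidAlgebra.mapDomain f x := rfl

lemma of_mul_emb (g : G) (x : MonoidAlgebra R K) :
    MonoidAlgebra.of R G g * MonoidAlgebra.mapDomainRingHom R K.subtype x
      = MonoidAlgebra.mapDomainRingHom R K.subtype
          (MonoidAlgebra.mapDomainRingHom R ((MulAut.conjNormal g : ↥K ≃* ↥K) : ↥K →* ↥K) x)
        * MonoidAlgebra.of R G g := by
  induction x using MonoidAlgebra.induction with
  | zero => simp
  | single_add k r f _ _ ih =>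
      rw [map_add, map_add, map_add, mul_add, add_mul, ih]
      congr 1
      show MonoidAlgebra.single g 1 * _ = _ * MonoidAlgebra.single g 1
      simp only [emb_apply, MonoidAlgebra.mapDomain_single]
      rw [MonoidAlgebra.single_mul_single, MonoidAlgebra.single_mul_single]
      simp [MulAut.conjNormal_apply, mul_assoc]

lemma conj_conj_inv (g : G) (x : MonoidAlgebra R K) :
    MonoidAlgebra.mapDomainRingHom R ((MulAut.conjNormal g : ↥K ≃* ↥K) : ↥K →* ↥K)
      (MonoidAlgebra.mapDomainRingHom R
        ((MulAut.conjNormal g⁻¹ : ↥K ≃* ↥K) : ↥K →* ↥K) x) = x := by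
  rw [← RingHom.comp_apply, ← MonoidAlgebra.mapDomainRingHom_comp]
  have : ((MulAut.conjNormal g : ↥K ≃* ↥K) : ↥K →* ↥K).comp
      ((MulAut.conjNormal g⁻¹ : ↥K ≃* ↥K) : ↥K →* ↥K) = MonoidHom.id _ := by
    ext k
    simp [MulAut.conjNormal_apply, mul_assoc]
  rw [this, MonoidAlgebra.mapDomainRingHom_id]
  rfl


lemma asmul_comp_gsmul (g : G) (x : MonoidAlgebra R K) :
    asmul M (MonoidAlgebra.mapDomainRingHom R K.subtype x) ∘ₗ gsmul R M g
      = gsmul R M g ∘ₗ asmul M (MonoidAlgebra.mapDomainRingHom R K.subtype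
          (MonoidAlgebra.mapDomainRingHom R ((MulAut.conjNormal g⁻¹ : ↥K ≃* ↥K) : ↥K →* ↥K) x)) := by
  ext m
  show (MonoidAlgebra.mapDomainRingHom R K.subtype x) • (MonoidAlgebra.of R G g • m)
      = MonoidAlgebra.of R G g • ((MonoidAlgebra.mapDomainRingHom R K.subtype
          (MonoidAlgebra.mapDomainRingHom R ((MulAut.conjNormal g⁻¹ : ↥K ≃* ↥K) : ↥K →* ↥K) x)) • m)
  rw [← mul_smul, ← mul_smul, of_mul_emb K g, conj_conj_inv]

lemma span_smul_eq (P : Submodule R M) (I : Ideal (MonoidAlgebra R K)) :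
    Submodule.span R {m : M | ∃ w ∈ P, ∃ x ∈ I,
        m = (MonoidAlgebra.mapDomainRingHom R K.subtype x) • w}
      = ⨆ x : I, P.map (asmul M (MonoidAlgebra.mapDomainRingHom R K.subtype ↑x)) := by
  have hset : {m : M | ∃ w ∈ P, ∃ x ∈ I,
        m = (MonoidAlgebra.mapDomainRingHom R K.subtype x) • w}
      = ⋃ x : I, (asmul M (MonoidAlgebra.mapDomainRingHom R K.subtype ↑x)) '' P := by
    ext m
    simp only [Set.mem_setOf_eq, Set.mem_iUnion, Set.mem_image, SetLike.mem_coe, asmul_apply]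
    constructor
    · rintro ⟨w, hw, x, hx, rfl⟩; exact ⟨⟨x, hx⟩, w, hw, rfl⟩
    · rintro ⟨⟨x, hx⟩, w, hw, rfl⟩; exact ⟨w, hw, x, hx, rfl⟩
  rw [hset, Submodule.span_iUnion]
  refine iSup_congr fun x => ?_
  rw [← Submodule.map_span, Submodule.span_eq]

set_option maxHeartbeats 1000000 in
lemma iSup_conj {α : Type*} [CompleteLattice α] (I : Ideal (MonoidAlgebra R K))
    (hIinv : ∀ g : G, I.map
      (MonoidAlgebra.mapDomainRingHom R (MulAut.conjNormal g : ↥K ≃* ↥K)) = I)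
    (g : G) (F : MonoidAlgebra R K → α) :
    (⨆ x : I, F (MonoidAlgebra.mapDomainRingHom R ((MulAut.conjNormal g : ↥K ≃* ↥K) : ↥K →* ↥K)
      (x : MonoidAlgebra R K)))
      = ⨆ x : I, F ↑x := by
  have hmem : ∀ (h : G), ∀ x ∈ I,
      MonoidAlgebra.mapDomainRingHom R ((MulAut.conjNormal h : ↥K ≃* ↥K) : ↥K →* ↥K) x ∈ I := by
    intro h x hx
    have hmm : MonoidAlgebra.mapDomainRingHom R ((MulAut.conjNormal h : ↥K ≃* ↥K) : ↥K →* ↥K) x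
        ∈ I.map (MonoidAlgebra.mapDomainRingHom R ((MulAut.conjNormal h : ↥K ≃* ↥K) : ↥K →* ↥K)) :=
      Ideal.mem_map_of_mem _ hx
    rwa [hIinv h] at hmm
  apply le_antisymm
  · refine iSup_le fun x => le_iSup_of_le
      (⟨MonoidAlgebra.mapDomainRingHom R ((MulAut.conjNormal g : ↥K ≃* ↥K) : ↥K →* ↥K) ↑x,
        hmem g ↑x x.2⟩ : I) le_rfl
  · refine iSup_le fun x => ?_
    refine le_iSup_of_le
      (⟨MonoidAlgebra.mapDomainRingHom R ((MulAut.conjNormal g⁻¹ : ↥K ≃* ↥K) : ↥K →* ↥K) ↑x,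
        hmem g⁻¹ ↑x x.2⟩ : I) ?_
    refine le_of_eq ?_
    show F ↑x = F (MonoidAlgebra.mapDomainRingHom R ((MulAut.conjNormal g : ↥K ≃* ↥K) : ↥K →* ↥K)
      (MonoidAlgebra.mapDomainRingHom R ((MulAut.conjNormal g⁻¹ : ↥K ≃* ↥K) : ↥K →* ↥K) ↑x))
    exact congrArg F (conj_conj_inv (R := R) K g (x : MonoidAlgebra R ↥K)).symm

lemma of_smul_span_mem (H : Subgroup G) (d : M) {g : G} (hg : g ∈ H) {w : M}
    (hw : w ∈ Submodule.span R {m : M | ∃ h ∈ H, m = MonoidAlgebra.of R G h • d}) :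
    MonoidAlgebra.of R G g • w
      ∈ Submodule.span R {m : M | ∃ h ∈ H, m = MonoidAlgebra.of R G h • d} := by
  induction hw using Submodule.span_induction with
  | mem m hm =>
      obtain ⟨h, hh, rfl⟩ := hm
      exact Submodule.subset_span ⟨g * h, H.mul_mem hg hh, by rw [map_mul, mul_smul]⟩
  | zero => rw [smul_zero]; exact zero_mem _
  | add a b _ _ ha hb => rw [smul_add]; exact add_mem ha hb
  | smul c a _ ha =>
      rw [show (MonoidAlgebra.of R G g) • (c • a) = c • (MonoidAlgebra.of R G g • a) from
        (gsmul R M g).map_smul c a]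
      exact Submodule.smul_mem _ c ha

lemma emb_smul_mem_span (H : Subgroup G) (hKH : K ≤ H) (d : M)
    (x : MonoidAlgebra R K) {w : M}
    (hw : w ∈ Submodule.span R {m : M | ∃ h ∈ H, m = MonoidAlgebra.of R G h • d}) :
    (MonoidAlgebra.mapDomainRingHom R K.subtype x) • w
      ∈ Submodule.span R {m : M | ∃ h ∈ H, m = MonoidAlgebra.of R G h • d} := by
  induction x using MonoidAlgebra.induction with
  | zero => rw [map_zero, zero_smul]; exact zero_mem _
  | single_add k r f _ _ ih =>
      rw [map_add, add_smul]
      refine add_mem ?_ ih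
      have hs : MonoidAlgebra.mapDomainRingHom R K.subtype (MonoidAlgebra.single k r)
          = r • MonoidAlgebra.of R G (↑k) := by
        rw [emb_apply, MonoidAlgebra.mapDomain_single]
        simp [MonoidAlgebra.of_apply, MonoidAlgebra.smul_single']
      rw [hs, smul_assoc]
      exact Submodule.smul_mem _ r (of_smul_span_mem M H d (hKH k.2) hw)

lemma quot_indep {R : Type*} [CommRing R] {ι : Type*} {M : Type*} [AddCommGroup M]
    [Module R M] (S N : ι → Submodule R M) (hS : iSupIndep S) (hNS : ∀ i, N i ≤ S i) :
    iSupIndep fun i => (S i).map (⨆ j, N j).mkQ := by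
  intro i
  rw [Submodule.disjoint_def]
  intro xb hx1 hx2
  have h2 : (⨆ (j) (_ : j ≠ i), (S j).map (⨆ j, N j).mkQ)
      = ((⨆ (j) (_ : j ≠ i), S j)).map (⨆ j, N j).mkQ := by
    simp_rw [Submodule.map_iSup]
  rw [h2] at hx2
  obtain ⟨x, hxS, rfl⟩ := Submodule.mem_map.mp hx1
  obtain ⟨y, hyS, hxy⟩ := Submodule.mem_map.mp hx2
  have hxyP : x - y ∈ (⨆ j, N j) := by
    rw [← Submodule.ker_mkQ (⨆ j, N j), LinearMap.mem_ker, map_sub, hxy, sub_self]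
  have hP : (⨆ j, N j) ≤ N i ⊔ ⨆ (j) (_ : j ≠ i), N j := by
    refine iSup_le fun j => ?_
    rcases eq_or_ne j i with rfl | h
    · exact le_sup_left
    · exact le_sup_of_le_right (le_iSup₂_of_le j h le_rfl)
  obtain ⟨n, hn, n', hn', hsum⟩ := Submodule.mem_sup.mp (hP hxyP)
  have hxn : x - n ∈ S i := sub_mem hxS (hNS i hn)
  have hxn2 : x - n ∈ ⨆ (j) (_ : j ≠ i), S j := by
    have hx' : x - n = y + n' := by
      have hx'' : x = y + (n + n') := by rw [hsum]; abel
      rw [hx'']; abel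
    rw [hx']
    exact add_mem hyS ((iSup_mono fun j => iSup_mono fun _ => hNS j) hn')
  have h0 : x - n = 0 := Submodule.disjoint_def.mp (hS i) _ hxn hxn2
  have hxN : x ∈ ⨆ j, N j := by
    have hx : x = n := by rwa [sub_eq_zero] at h0
    rw [hx]; exact le_iSup N i hn
  rw [Submodule.mkQ_apply, Submodule.Quotient.mk_eq_zero]
  exact hxN

end Aux

/-- `dRG/(dRG)I` decomposes as `⊕_{t∈T} ((dRH)/(dRH)I)t` over a right transversal `T`
of `H` in `G`, given that `dRG = dRH ⊗_{RH} RG` (expressed as `dRG = ⊕_{t∈T} (dRH)t`)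
and `I` is a `G`-invariant ideal of `RK`, `K ⊴ G`, `K ≤ H`, `|G:H| < ∞`. -/
theorem stmt_18 {R : Type*} [CommRing R] {G : Type*} [Group G]
    (H : Subgroup G) [H.FiniteIndex] (K : Subgroup G) [K.Normal] (hKH : K ≤ H)
    (M : Type*) [AddCommGroup M] [Module R M] [Module (MonoidAlgebra R G) M]
    [IsScalarTower R (MonoidAlgebra R G) M]
    (d : M)
    -- `dRG` as an `R`-submodule and `dRH`:
    (dRG : Submodule R M)
    (hdRG : dRG = (Submodule.span (MonoidAlgebra R G) {d}).restrictScalars R)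
    (dRH : Submodule R M)
    (hdRH : dRH = Submodule.span R {m : M | ∃ h ∈ H, m = MonoidAlgebra.of R G h • d})
    -- a right transversal `T` of `H` in `G` realizing `dRG = dRH ⊗_{RH} RG`:
    (T : Set G) (htrans : ∀ g : G, ∃! t, t ∈ T ∧ g * t⁻¹ ∈ H)
    (hindep : iSupIndep (fun t : T => dRH.map (gsmul R M (t : G))))
    (hsup : (⨆ t : T, dRH.map (gsmul R M (t : G))) = dRG)
    -- a `G`-invariant ideal `I` of `RK`:
    (I : Ideal (MonoidAlgebra R K))
    (hIinv : ∀ g : G, I.map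
      (MonoidAlgebra.mapDomainRingHom R (MulAut.conjNormal g : ↥K ≃* ↥K)) = I)
    -- the submodules `(dRG)I` and `(dRH)I`:
    (dRGI : Submodule R M)
    (hdRGI : dRGI = Submodule.span R {m : M | ∃ w ∈ dRG, ∃ x ∈ I,
      m = (MonoidAlgebra.mapDomainRingHom R K.subtype x) • w})
    (dRHI : Submodule R M)
    (hdRHI : dRHI = Submodule.span R {m : M | ∃ w ∈ dRH, ∃ x ∈ I,
      m = (MonoidAlgebra.mapDomainRingHom R K.subtype x) • w}) :
    -- `dRG/(dRG)I = ⊕_{t∈T} ((dRH)/(dRH)I)t`: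
    iSupIndep (fun t : T => (dRH.map (gsmul R M (t : G))).map dRGI.mkQ) ∧
    (⨆ t : T, (dRH.map (gsmul R M (t : G))).map dRGI.mkQ) = dRG.map dRGI.mkQ ∧
    -- via `(dRG)I = ⊕_{t∈T} ((dRH)I)t`:
    dRGI = ⨆ t : T, dRHI.map (gsmul R M (t : G)) := by
  have hdRHI' : dRHI
      = ⨆ x : I, dRH.map (asmul M (MonoidAlgebra.mapDomainRingHom R K.subtype ↑x)) := by
    rw [hdRHI, span_smul_eq M K dRH I]
  have hdRGI' : dRGI
      = ⨆ x : I, dRG.map (asmul M (MonoidAlgebra.mapDomainRingHom R K.subtype ↑x)) := by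
    rw [hdRGI, span_smul_eq M K dRG I]
  have key : ∀ g : G, (⨆ x : I, (dRH.map (gsmul R M g)).map
        (asmul M (MonoidAlgebra.mapDomainRingHom R K.subtype ↑x)))
      = (⨆ x : I, dRH.map (asmul M (MonoidAlgebra.mapDomainRingHom R K.subtype ↑x))).map
          (gsmul R M g) := by
    intro g
    have step : ∀ y : MonoidAlgebra R ↥K,
        (dRH.map (gsmul R M g)).map (asmul M (MonoidAlgebra.mapDomainRingHom R K.subtype y))
          = (dRH.map (asmul M (MonoidAlgebra.mapDomainRingHom R K.subtype
              (MonoidAlgebra.mapDomainRingHom R ((MulAut.conjNormal g⁻¹ : ↥K ≃* ↥K) : ↥K →* ↥K) y)))).map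
              (gsmul R M g) := by
      intro y
      rw [← Submodule.map_comp, ← Submodule.map_comp, asmul_comp_gsmul]
    calc (⨆ x : I, (dRH.map (gsmul R M g)).map
            (asmul M (MonoidAlgebra.mapDomainRingHom R K.subtype ↑x)))
        = ⨆ x : I, (dRH.map (asmul M (MonoidAlgebra.mapDomainRingHom R K.subtype
            (MonoidAlgebra.mapDomainRingHom R ((MulAut.conjNormal g⁻¹ : ↥K ≃* ↥K) : ↥K →* ↥K) ↑x)))).map
            (gsmul R M g) := iSup_congr fun x => step ↑x
      _ = ⨆ x : I, (dRH.map (asmul M (MonoidAlgebra.mapDomainRingHom R K.subtype ↑x))).map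
            (gsmul R M g) :=
          iSup_conj K I hIinv g⁻¹ (fun y => (dRH.map (asmul M
            (MonoidAlgebra.mapDomainRingHom R K.subtype y))).map (gsmul R M g))
      _ = _ := (Submodule.map_iSup _ _).symm
  have part3 : dRGI = ⨆ t : T, dRHI.map (gsmul R M (t : G)) := by
    rw [hdRGI']
    calc (⨆ x : I, dRG.map (asmul M (MonoidAlgebra.mapDomainRingHom R K.subtype ↑x)))
        = ⨆ x : I, ⨆ t : T, (dRH.map (gsmul R M (t : G))).map
            (asmul M (MonoidAlgebra.mapDomainRingHom R K.subtype ↑x)) :=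
          iSup_congr fun x => by rw [← hsup, Submodule.map_iSup]
      _ = ⨆ t : T, ⨆ x : I, (dRH.map (gsmul R M (t : G))).map
            (asmul M (MonoidAlgebra.mapDomainRingHom R K.subtype ↑x)) := iSup_comm
      _ = ⨆ t : T, (⨆ x : I, dRH.map (asmul M
            (MonoidAlgebra.mapDomainRingHom R K.subtype ↑x))).map (gsmul R M (t : G)) :=
          iSup_congr fun t => key (t : G)
      _ = ⨆ t : T, dRHI.map (gsmul R M (t : G)) := by rw [← hdRHI']
  have part2 : (⨆ t : T, (dRH.map (gsmul R M (t : G))).map dRGI.mkQ)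
      = dRG.map dRGI.mkQ := by
    rw [← hsup, Submodule.map_iSup]
  have hNle : ∀ t : T, dRHI.map (gsmul R M (t : G)) ≤ dRH.map (gsmul R M (t : G)) := by
    intro t
    refine Submodule.map_mono ?_
    rw [hdRHI, Submodule.span_le]
    rintro m ⟨w, hw, x, hx, rfl⟩
    rw [hdRH] at hw
    rw [hdRH]
    exact SetLike.mem_coe.mpr (emb_smul_mem_span M K H hKH d x hw)
  have part1 := quot_indep (fun t : T => dRH.map (gsmul R M (t : G)))
      (fun t : T => dRHI.map (gsmul R M (t : G))) hindep hNle
  rw [← part3] at part1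
  exact ⟨part1, part2, part3⟩
end
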